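/- arXiv:1706.03567 — 2 statements merged into one kernel-verified Lean document; each statement's English description precedes it below -/
import Mathlib

section
/- Let ρ > 0, ϑ > 0, λ⁺ > 0 and λ⁻ > 0, and define h* = (λ⁺+λ⁻)/(2ρ) − sqrt( ((λ⁺+λ⁻)/(2ρ) + 1/ϑ)² − 2λ⁺/(ϑρ) ). Then −1/ϑ < h* < 1/ϑ, and h* satisfies the first-order condition λ⁺ϑ/(1+h*ϑ) − λ⁻ϑ/(1−h*ϑ) = ρ. -/
/-- The explicit optimal log-utility strategy
`h* = (λ⁺+λ⁻)/(2ρ) − sqrt(((λ⁺+λ⁻)/(2ρ) + 1/ϑ)² − 2λ⁺/(ϑρ))` satisfies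
`−1/ϑ < h* < 1/ϑ` and the first-order condition
`λ⁺ϑ/(1+h*ϑ) − λ⁻ϑ/(1−h*ϑ) = ρ`. -/
theorem optimal_strategy_admissible_and_foc
    (ρ ϑ lp lm : ℝ) (hρ : 0 < ρ) (hϑ : 0 < ϑ) (hlp : 0 < lp) (hlm : 0 < lm)
    (hstar : ℝ)
    (hdef : hstar = (lp + lm) / (2 * ρ) -
      Real.sqrt (((lp + lm) / (2 * ρ) + 1 / ϑ) ^ 2 - 2 * lp / (ϑ * ρ))) :
    (-(1 / ϑ) < hstar ∧ hstar < 1 / ϑ) ∧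
    lp * ϑ / (1 + hstar * ϑ) - lm * ϑ / (1 - hstar * ϑ) = ρ := by
  set A : ℝ := (lp + lm) / (2 * ρ) with hA
  set B : ℝ := 1 / ϑ with hB
  set D : ℝ := (A + B) ^ 2 - 2 * lp / (ϑ * ρ) with hD
  have hApos : 0 < A := by positivity
  have hBpos : 0 < B := by positivity
  -- key identity: D = (A - B)^2 + 2*lm*B/ρ
  have hkey : D = (A - B) ^ 2 + 2 * lm * B / ρ := by
    rw [hD, hA, hB]
    field_simp
    ring
  have hDpos : 0 < D := by
    rw [hkey]; positivity
  set s : ℝ := Real.sqrt D with hs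
  have hs2 : s ^ 2 = D := Real.sq_sqrt hDpos.le
  have hspos : 0 < s := Real.sqrt_pos.mpr hDpos
  have hsltAB : s < A + B := by
    rw [hs]
    rw [show A + B = Real.sqrt ((A + B) ^ 2) by
      rw [Real.sqrt_sq (by positivity)]]
    apply Real.sqrt_lt_sqrt (by nlinarith)
    rw [hD]
    have : 0 < 2 * lp / (ϑ * ρ) := by positivity
    linarith
  have hABlts : A - B < s := by
    rcases le_or_gt A B with h | h
    · linarith
    · have hlt : (A - B) ^ 2 < D := by
        rw [hkey]
        have : 0 < 2 * lm * B / ρ := by positivity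
        linarith
      nlinarith [hlt, hs2, hspos, sq_nonneg (s - (A - B))]
  have hdef' : hstar = A - s := hdef
  have h1 : -(1 / ϑ) < hstar := by rw [hdef', ← hB]; linarith
  have h2 : hstar < 1 / ϑ := by rw [hdef', ← hB]; linarith
  refine ⟨⟨h1, h2⟩, ?_⟩
  have hne : ϑ ≠ 0 := hϑ.ne'
  have hρne : ρ ≠ 0 := hρ.ne'
  have hden1 : 0 < 1 + hstar * ϑ := by
    have h := mul_lt_mul_of_pos_right h1 hϑ
    rw [neg_mul, one_div, inv_mul_cancel₀ hne] at h
    linarith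
  have hden2 : 0 < 1 - hstar * ϑ := by
    have h := mul_lt_mul_of_pos_right h2 hϑ
    rw [one_div, inv_mul_cancel₀ hne] at h
    linarith
  -- hstar satisfies the quadratic: ρ ϑ² h² − (lp+lm) ϑ² h + (lp−lm) ϑ − ρ = 0
  have hquad : ρ * ϑ^2 * hstar^2 - (lp + lm) * ϑ^2 * hstar + (lp - lm) * ϑ - ρ = 0 := by
    have hs2' : s ^ 2 = ((lp + lm) / (2 * ρ) + 1 / ϑ) ^ 2 - 2 * lp / (ϑ * ρ) := by
      rw [hs2, hD, hA, hB]
    have hs2c : s ^ 2 * (4 * ρ ^ 2 * ϑ ^ 2) = ((lp + lm) * ϑ + 2 * ρ) ^ 2 - 8 * lp * ϑ * ρ := by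
      rw [hs2']; field_simp; ring
    have hdefc : hstar * (2 * ρ) = (lp + lm) - 2 * ρ * s := by
      rw [hdef', hA]; field_simp
    have hquadc : (ρ * ϑ^2 * hstar^2 - (lp + lm) * ϑ^2 * hstar + (lp - lm) * ϑ - ρ) * (4 * ρ ^ 2) = 0 := by
      linear_combination (ρ * ϑ ^ 2 * (hstar * (2 * ρ) + ((lp + lm) - 2 * ρ * s))
        - 2 * ρ * (lp + lm) * ϑ ^ 2) * hdefc + ρ * hs2c
    rcases mul_eq_zero.mp hquadc with h | h
    · exact h
    · exfalso; nlinarith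
  rw [div_sub_div _ _ hden1.ne' hden2.ne', div_eq_iff (by positivity)]
  linear_combination hquad
end

section
/- Let ρ > 0, ϑ > 0, λ⁺ > 0 and λ⁻ > 0, and define the two-point log-utility objective φ(h) = (1−h)ρ + λ⁺ log(1+hϑ) + λ⁻ log(1−hϑ) for h ∈ (−1/ϑ, 1/ϑ). Then φ is strictly concave on (−1/ϑ, 1/ϑ), and h* = (λ⁺+λ⁻)/(2ρ) − sqrt( ((λ⁺+λ⁻)/(2ρ) + 1/ϑ)² − 2λ⁺/(ϑρ) ) is its unique global maximizer on (−1/ϑ, 1/ϑ): φ(h) < φ(h*) for all h ∈ (−1/ϑ, 1/ϑ) with h ≠ h*. -/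
open Set Real

/-! Each term of `φ` is concave (the logarithms strictly so, being `log` composed with an
injective affine map), so `φ` is strictly concave and a critical point inside the interval is its
unique maximizer. Clearing denominators, `φ'(h) = 0` is the quadratic equation
`(h - m)² = D` with `m = (λ⁺+λ⁻)/(2ρ)` and `D = (m + 1/ϑ)² - 2λ⁺/(ϑρ)`. Since
`(1/ϑ - m)² < D < (-1/ϑ - m)²`, the quadratic changes sign on the interval, so exactly its smaller
root `h* = m - √D` lies in `(−1/ϑ, 1/ϑ)`. -/

noncomputable def twoPointLogObjective (ρ ϑ lp lm h : ℝ) : ℝ :=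
  (1 - h) * ρ + lp * log (1 + h * ϑ) + lm * log (1 - h * ϑ)

theorem StrictConcaveOn.const_mul {E : Type*} [AddCommMonoid E] [Module ℝ E] {s : Set E}
    {f : E → ℝ} {c : ℝ}
    (hf : StrictConcaveOn ℝ s f) (hc : 0 < c) : StrictConcaveOn ℝ s (fun x => c * f x) := by
  refine ⟨hf.1, fun x hx y hy hxy a b ha hb hab => ?_⟩
  have := hf.2 hx hy hxy ha hb hab
  simp only [smul_eq_mul] at this ⊢
  nlinarith

theorem StrictConcaveOn.comp_affine {s t : Set ℝ} {g : ℝ → ℝ} {a b : ℝ}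
    (hg : StrictConcaveOn ℝ t g) (hs : Convex ℝ s) (hb : b ≠ 0)
    (hst : MapsTo (fun x => a + x * b) s t) : StrictConcaveOn ℝ s (fun x => g (a + x * b)) := by
  refine ⟨hs, fun x hx y hy hxy p q hp hq hpq => ?_⟩
  have hne : a + x * b ≠ a + y * b := by
    simpa [hb] using hxy
  have := hg.2 (hst hx) (hst hy) hne hp hq hpq
  convert this using 2
  simp only [smul_eq_mul]
  linear_combination (-a) * hpq

theorem StrictConcaveOn.lt_of_hasDerivAt_eq_zero {s : Set ℝ} {f : ℝ → ℝ} {x y : ℝ}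
    (hf : StrictConcaveOn ℝ s f) (hx : x ∈ s) (hf' : HasDerivAt f 0 x) (hy : y ∈ s)
    (hyx : y ≠ x) : f y < f x := by
  rcases hyx.lt_or_gt with hlt | hgt
  · have := hf.lt_slope_of_hasDerivAt hy hx hlt hf'
    rw [slope_def_field, lt_div_iff₀ (sub_pos.2 hlt)] at this
    linarith
  · have := hf.slope_lt_of_hasDerivAt hx hy hgt hf'
    rw [slope_def_field, div_lt_iff₀ (sub_pos.2 hgt)] at this
    linarith

theorem sub_sqrt_mem_Ioo {m D x y : ℝ} (hxy : x < y) (hx : D < (x - m) ^ 2)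
    (hy : (y - m) ^ 2 < D) : m - √D ∈ Ioo x y := by
  have hy' : |y - m| < √D := by
    rw [← sqrt_sq_eq_abs]; exact sqrt_lt_sqrt (sq_nonneg _) hy
  have hx' : √D < |x - m| := by
    rw [← sqrt_sq_eq_abs]; exact sqrt_lt_sqrt ((sq_nonneg _).trans hy.le) hx
  rw [abs_lt] at hy'
  rcases lt_abs.1 hx' with h | h <;> constructor <;> linarith

theorem one_add_mul_pos_and_one_sub_mul_pos {ϑ h : ℝ} (hϑ : 0 < ϑ)
    (hh : h ∈ Ioo (-(1 / ϑ)) (1 / ϑ)) : 0 < 1 + h * ϑ ∧ 0 < 1 - h * ϑ := by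
  have hlo := mul_lt_mul_of_pos_right hh.1 hϑ
  have hhi := mul_lt_mul_of_pos_right hh.2 hϑ
  rw [neg_mul, one_div_mul_cancel hϑ.ne'] at hlo
  rw [one_div_mul_cancel hϑ.ne'] at hhi
  constructor <;> linarith

section TwoPointLogObjective

variable {ρ ϑ lp lm : ℝ}

theorem strictConcaveOn_twoPointLogObjective (hϑ : 0 < ϑ) (hlp : 0 < lp) (hlm : 0 < lm) :
    StrictConcaveOn ℝ (Ioo (-(1 / ϑ)) (1 / ϑ)) (twoPointLogObjective ρ ϑ lp lm) := by
  have hI : Convex ℝ (Ioo (-(1 / ϑ)) (1 / ϑ)) := convex_Ioo _ _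
  have hlin : ConcaveOn ℝ (Ioo (-(1 / ϑ)) (1 / ϑ)) (fun h => (1 - h) * ρ) :=
    ⟨hI, fun x _ y _ a b _ _ hab => le_of_eq (by simp only [smul_eq_mul]; linear_combination ρ * hab)⟩
  have hplus : StrictConcaveOn ℝ (Ioo (-(1 / ϑ)) (1 / ϑ)) (fun h => lp * log (1 + h * ϑ)) := by
    refine (strictConcaveOn_log_Ioi.comp_affine (a := 1) hI hϑ.ne' fun h hh => ?_).const_mul hlp
    exact (one_add_mul_pos_and_one_sub_mul_pos hϑ hh).1
  have hminus : StrictConcaveOn ℝ (Ioo (-(1 / ϑ)) (1 / ϑ)) (fun h => lm * log (1 - h * ϑ)) := by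
    refine ((strictConcaveOn_log_Ioi.comp_affine (a := 1) hI (neg_ne_zero.2 hϑ.ne')
      fun h hh => ?_).const_mul hlm).congr fun h _ => by simp only [mul_neg, ← sub_eq_add_neg]
    simpa [← sub_eq_add_neg] using (one_add_mul_pos_and_one_sub_mul_pos hϑ hh).2
  exact (hlin.add_strictConcaveOn hplus).add hminus

theorem hasDerivAt_twoPointLogObjective {h : ℝ} (h₁ : 1 + h * ϑ ≠ 0) (h₂ : 1 - h * ϑ ≠ 0) :
    HasDerivAt (twoPointLogObjective ρ ϑ lp lm)
      (-ρ + lp * (ϑ / (1 + h * ϑ)) + lm * (-ϑ / (1 - h * ϑ))) h := by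
  have hid := hasDerivAt_id h
  have hlin : HasDerivAt (fun h : ℝ => (1 - h) * ρ) (-ρ) h := by
    simpa using (hid.const_sub 1).mul_const ρ
  have hplus := (((hid.mul_const ϑ).const_add 1).log h₁).const_mul lp
  have hminus := (((hid.mul_const ϑ).const_sub 1).log h₂).const_mul lm
  simp only [id, one_mul] at hplus hminus
  exact (hlin.add hplus).add hminus

theorem hasDerivAt_twoPointLogObjective_eq_zero {h : ℝ} (hρ : ρ ≠ 0) (hϑ : ϑ ≠ 0)
    (h₁ : 1 + h * ϑ ≠ 0) (h₂ : 1 - h * ϑ ≠ 0)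
    (hroot : (h - (lp + lm) / (2 * ρ)) ^ 2 = ((lp + lm) / (2 * ρ) + 1 / ϑ) ^ 2 - 2 * lp / (ϑ * ρ)) :
    HasDerivAt (twoPointLogObjective ρ ϑ lp lm) 0 h := by
  convert hasDerivAt_twoPointLogObjective h₁ h₂ using 1
  have hq : ρ * ϑ ^ 2 * h ^ 2 - (lp + lm) * ϑ ^ 2 * h + (lp - lm) * ϑ - ρ = 0 := by
    field_simp at hroot
    refine (mul_eq_zero.1 ?_).resolve_left (by positivity : 4 * ρ ≠ 0)
    linear_combination hroot
  have e₁ : ϑ / (1 + h * ϑ) * (1 + h * ϑ) = ϑ := div_mul_cancel₀ _ h₁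
  have e₂ : -ϑ / (1 - h * ϑ) * (1 - h * ϑ) = -ϑ := div_mul_cancel₀ _ h₂
  refine ((mul_eq_zero.1 ?_).resolve_right (mul_ne_zero h₁ h₂)).symm
  linear_combination (lp * (1 - h * ϑ)) * e₁ + (lm * (1 + h * ϑ)) * e₂ + hq

end TwoPointLogObjective

/-- The two-point log-utility objective
`φ(h) = (1−h)ρ + λ⁺ log(1+hϑ) + λ⁻ log(1−hϑ)` is strictly concave on `(−1/ϑ, 1/ϑ)`, and
`h* = (λ⁺+λ⁻)/(2ρ) − sqrt(((λ⁺+λ⁻)/(2ρ) + 1/ϑ)² − 2λ⁺/(ϑρ))` is its unique global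
maximizer on `(−1/ϑ, 1/ϑ)`. -/
theorem two_point_log_objective_strictly_concave_unique_max
    (ρ ϑ lp lm : ℝ) (hρ : 0 < ρ) (hϑ : 0 < ϑ) (hlp : 0 < lp) (hlm : 0 < lm)
    (hstar : ℝ)
    (hdef : hstar = (lp + lm) / (2 * ρ) -
      Real.sqrt (((lp + lm) / (2 * ρ) + 1 / ϑ) ^ 2 - 2 * lp / (ϑ * ρ))) :
    StrictConcaveOn ℝ (Set.Ioo (-(1 / ϑ)) (1 / ϑ))
      (fun h => (1 - h) * ρ + lp * Real.log (1 + h * ϑ) + lm * Real.log (1 - h * ϑ)) ∧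
    ∀ h ∈ Set.Ioo (-(1 / ϑ)) (1 / ϑ), h ≠ hstar →
      (1 - h) * ρ + lp * Real.log (1 + h * ϑ) + lm * Real.log (1 - h * ϑ) <
      (1 - hstar) * ρ + lp * Real.log (1 + hstar * ϑ) + lm * Real.log (1 - hstar * ϑ) := by
  set m := (lp + lm) / (2 * ρ)
  set D := (m + 1 / ϑ) ^ 2 - 2 * lp / (ϑ * ρ)
  have hD_lt : D < (-(1 / ϑ) - m) ^ 2 := by
    have : 0 < 2 * lp / (ϑ * ρ) := by positivity
    linarith [show (-(1 / ϑ) - m) ^ 2 = (m + 1 / ϑ) ^ 2 by ring]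
  have hlt_D : (1 / ϑ - m) ^ 2 < D := by
    have hsplit : 2 * lp / (ϑ * ρ) + 2 * lm / (ϑ * ρ) = 4 * m * (1 / ϑ) := by
      simp only [m]; field_simp; ring
    have : 0 < 2 * lm / (ϑ * ρ) := by positivity
    linarith [show (1 / ϑ - m) ^ 2 = (m + 1 / ϑ) ^ 2 - 4 * m * (1 / ϑ) by ring]
  have hmem : hstar ∈ Ioo (-(1 / ϑ)) (1 / ϑ) :=
    hdef ▸ sub_sqrt_mem_Ioo (neg_lt_self (by positivity)) hD_lt hlt_D
  obtain ⟨h₁, h₂⟩ := one_add_mul_pos_and_one_sub_mul_pos hϑ hmem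
  have hcrit : HasDerivAt (twoPointLogObjective ρ ϑ lp lm) 0 hstar := by
    refine hasDerivAt_twoPointLogObjective_eq_zero hρ.ne' hϑ.ne' h₁.ne' h₂.ne' ?_
    rw [hdef, sub_sub_cancel_left, neg_sq, sq_sqrt ((sq_nonneg _).trans hlt_D.le)]
  have hconc := strictConcaveOn_twoPointLogObjective (ρ := ρ) hϑ hlp hlm
  exact ⟨hconc, fun h hh hne => hconc.lt_of_hasDerivAt_eq_zero hmem hcrit hh hne⟩
end
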